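/- Suppose E_{(λ_0,…,λ_n)} and E_{(λ_0,…,λ_{n−1})} are extended Chebyshev systems for {a,b}, a ≠ b ∈ ℝ. For k = 0,…,n−1 define d_k := lim_{x↑b} (d/dx p_{(λ_0,…,λ_n),k}(x)) / p_{(λ_0,…,λ_{n−1}),k}(x); then d_k exists and d_k ≠ 0. Moreover, for k = 1,…,n−1, ((d/dx) − λ_n) p_{(λ_0,…,λ_n),k} = p_{(λ_0,…,λ_{n−1}),k−1} + d_k · p_{(λ_0,…,λ_{n−1}),k}; for k = 0, ((d/dx) − λ_n) p_{(λ_0,…,λ_n),0} = d_0 · p_{(λ_0,…,λ_{n−1}),0}; and for k = n, ((d/dx) − λ_n) p_{(λ_0,…,λ_n),n} = p_{(λ_0,…,λ_{n−1}),n−1}. -/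

import Mathlib

open Filter Topology Set

noncomputable section

/-- The differential operator `(d/dx − λ₀)⋯(d/dx − λₙ)` applied to `f`,
where `λ₀,…,λₙ` are the entries of the list. -/
def LOp : List ℂ → (ℝ → ℂ) → (ℝ → ℂ)
  | [], f => f
  | c :: r, f => LOp r (fun x => deriv f x - c * f x)

/-- The space `E_Λ` of exponential polynomials with eigenvalue vector `l`. -/
def ExpPoly (l : List ℂ) : Set (ℝ → ℂ) :=
  {f | ContDiff ℝ (⊤ : ℕ∞) f ∧ LOp l f = 0}

/-- `f` has a zero of order (multiplicity) exactly `k` at `x₀`. -/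
def HasZeroOfOrder (f : ℝ → ℂ) (x₀ : ℝ) (k : ℕ) : Prop :=
  (∀ j < k, iteratedDeriv j f x₀ = 0) ∧ iteratedDeriv k f x₀ ≠ 0

/-- `E_l` (with `l.length = n + 1`) is an extended Chebyshev system for `A ⊆ ℝ`:
every nonzero member has at most `n` zeros in `A`, counted with multiplicity. -/
def IsExtChebyshev (l : List ℂ) (A : Set ℝ) : Prop :=
  ∀ f ∈ ExpPoly l, f ≠ 0 → ∀ (s : Finset ℝ) (m : ℝ → ℕ),
    (↑s : Set ℝ) ⊆ A → (∀ x ∈ s, ∀ j < m x, iteratedDeriv j f x = 0) →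
    ∑ x ∈ s, m x ≤ l.length - 1

/-- `p k`, `k = 0,…,n` (with `l.length = n + 1`) is the normalized Bernstein basis of
`E_l` for the points `a ≠ b`: `p k` lies in `E_l`, has a zero of order exactly `k`
at `a`, a zero of order exactly `n − k` at `b`, and `(p k)^{(k)}(a) = 1`. -/
def IsBernsteinBasis (l : List ℂ) (a b : ℝ) (p : ℕ → ℝ → ℂ) : Prop :=
  ∀ k ≤ l.length - 1,
    p k ∈ ExpPoly l ∧ HasZeroOfOrder (p k) a k ∧
      HasZeroOfOrder (p k) b (l.length - 1 - k) ∧ iteratedDeriv k (p k) a = 1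

/-- `E_l` is closed under (pointwise) complex conjugation. -/
def ConjClosed (l : List ℂ) : Prop :=
  ∀ f ∈ ExpPoly l, (fun x => starRingEnd ℂ (f x)) ∈ ExpPoly l

/-! The operator `f ↦ f' - λₙ f` commutes with the other factors of the differential operator, so
it maps `E_{(λ₀,…,λₙ)}` into `E_{(λ₀,…,λₙ₋₁)}` and lowers the orders of the zeros of `p_k` at
`a` and `b` by one. In the Chebyshev space `E_{(λ₀,…,λₙ₋₁)}` an element is determined by `n`
Hermite data at `{a, b}`: matching `k + 1` derivatives at `a` and `n - 1 - k` at `b` pins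
`p_k' - λₙ p_k` down as `q_{k-1} + d_k q_k`. Since `p_k' - λₙ p_k` has a zero of order exactly
`n - 1 - k` at `b` while `q_{k-1}` vanishes to higher order there, `d_k ≠ 0`, and Taylor's theorem
at `b` gives `p_k' / q_k → d_k`. -/

theorem LOp_cons (c : ℂ) (l : List ℂ) (f : ℝ → ℂ) : LOp (c :: l) f = LOp l (deriv f - c • f) :=
  rfl

theorem LOp_append (l₁ l₂ : List ℂ) (f : ℝ → ℂ) : LOp (l₁ ++ l₂) f = LOp l₂ (LOp l₁ f) := by
  induction l₁ generalizing f with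
  | nil => rfl
  | cons c r ih => exact ih _

theorem ContDiff.deriv_sub_smul {f : ℝ → ℂ} (hf : ContDiff ℝ (⊤ : ℕ∞) f) (c : ℂ) :
    ContDiff ℝ (⊤ : ℕ∞) (deriv f - c • f) :=
  (contDiff_infty_iff_deriv.mp hf).2.sub (hf.const_smul c)

theorem LOp_smul (l : List ℂ) (c : ℂ) (f : ℝ → ℂ) : LOp l (c • f) = c • LOp l f := by
  induction l generalizing f with
  | nil => rfl
  | cons e r ih =>
    have hderiv : deriv (c • f) = c • deriv f := funext fun _ => deriv_const_smul_field c f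
    rw [LOp_cons, LOp_cons, ← ih, hderiv, smul_comm e c f, ← smul_sub]

theorem LOp_add (l : List ℂ) {f g : ℝ → ℂ} (hf : ContDiff ℝ (⊤ : ℕ∞) f)
    (hg : ContDiff ℝ (⊤ : ℕ∞) g) : LOp l (f + g) = LOp l f + LOp l g := by
  induction l generalizing f g with
  | nil => rfl
  | cons c r ih =>
    have hderiv : deriv (f + g) = deriv f + deriv g :=
      funext fun x => deriv_add (hf.differentiable (by simp) x) (hg.differentiable (by simp) x)
    rw [LOp_cons, LOp_cons, LOp_cons, ← ih (hf.deriv_sub_smul c) (hg.deriv_sub_smul c), hderiv,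
      smul_add, add_sub_add_comm]

theorem LOp_deriv_sub_smul (l : List ℂ) (c : ℂ) {f : ℝ → ℂ} (hf : ContDiff ℝ (⊤ : ℕ∞) f) :
    LOp l (deriv f - c • f) = deriv (LOp l f) - c • LOp l f := by
  induction l generalizing f with
  | nil => rfl
  | cons e r ih =>
    have hdf : Differentiable ℝ (deriv f) :=
      (contDiff_infty_iff_deriv.mp hf).2.differentiable (by simp)
    have hcomm : deriv (deriv f - c • f) - e • (deriv f - c • f) =
        deriv (deriv f - e • f) - c • (deriv f - e • f) := by
      funext x
      have hfx := hf.differentiable (by simp) x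
      simp only [Pi.sub_apply, Pi.smul_apply, deriv_sub (hdf x) (hfx.const_smul c),
        deriv_sub (hdf x) (hfx.const_smul e), deriv_const_smul_field]
      module
    rw [LOp_cons, LOp_cons, hcomm, ih (hf.deriv_sub_smul e)]

def expPolySubmodule (l : List ℂ) : Submodule ℂ (ℝ → ℂ) where
  carrier := ExpPoly l
  add_mem' hf hg := ⟨hf.1.add hg.1, by rw [LOp_add l hf.1 hg.1, hf.2, hg.2, add_zero]⟩
  zero_mem' := ⟨contDiff_const, by simpa using LOp_smul l 0 0⟩
  smul_mem' c _ hf := ⟨hf.1.const_smul c, by rw [LOp_smul, hf.2, smul_zero]⟩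

theorem deriv_sub_smul_mem_expPoly {l : List ℂ} {c : ℂ} {f : ℝ → ℂ}
    (hf : f ∈ ExpPoly (l ++ [c])) : deriv f - c • f ∈ ExpPoly l := by
  refine ⟨hf.1.deriv_sub_smul c, ?_⟩
  rw [LOp_deriv_sub_smul l c hf.1]
  exact (LOp_append l [c] f).symm.trans hf.2

theorem iteratedDeriv_deriv_sub_smul {f : ℝ → ℂ} (hf : ContDiff ℝ (⊤ : ℕ∞) f) (c : ℂ) (j : ℕ)
    (x : ℝ) :
    iteratedDeriv j (deriv f - c • f) x = iteratedDeriv (j + 1) f x - c * iteratedDeriv j f x := by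
  have hdf : ContDiffAt ℝ j (deriv f) x :=
    ((contDiff_infty_iff_deriv.mp hf).2.of_le (by exact_mod_cast le_top)).contDiffAt
  have hcf : ContDiffAt ℝ j (c • f) x :=
    ((hf.const_smul c).of_le (by exact_mod_cast le_top)).contDiffAt
  rw [iteratedDeriv_sub hdf hcf, iteratedDeriv_const_smul_field, iteratedDeriv_succ', smul_eq_mul]

theorem IsExtChebyshev.eq_of_iteratedDeriv_eq {l : List ℂ} {a b : ℝ}
    (hcheb : IsExtChebyshev l {a, b}) (hab : a ≠ b) {f g : ℝ → ℂ} (hf : f ∈ ExpPoly l)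
    (hg : g ∈ ExpPoly l) {α β : ℕ} (hαβ : l.length ≤ α + β)
    (ha : ∀ j < α, iteratedDeriv j f a = iteratedDeriv j g a)
    (hb : ∀ j < β, iteratedDeriv j f b = iteratedDeriv j g b) : f = g := by
  classical
  have hfg : f - g ∈ ExpPoly l := (expPolySubmodule l).sub_mem hf hg
  have hzeros : ∀ x ∈ ({a, b} : Finset ℝ), ∀ j < (if x = a then α else β),
      iteratedDeriv j (f - g) x = 0 := by
    intro x hx j hj
    rw [iteratedDeriv_sub (hf.1.of_le (by exact_mod_cast le_top)).contDiffAt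
      (hg.1.of_le (by exact_mod_cast le_top)).contDiffAt, sub_eq_zero]
    rcases Finset.mem_insert.1 hx with rfl | hx
    · exact ha j (by simpa using hj)
    obtain rfl := Finset.mem_singleton.1 hx
    exact hb j (by simpa [hab.symm] using hj)
  by_contra hne
  have hle := hcheb (f - g) hfg (sub_ne_zero.2 hne) {a, b} _ (by simp) hzeros
  rw [Finset.sum_pair hab, if_pos rfl, if_neg hab.symm] at hle
  obtain rfl : l = [] := List.length_eq_zero_iff.1 (by omega)
  exact hne (sub_eq_zero.1 hfg.2)

theorem iteratedDeriv_add_smul {f g : ℝ → ℂ} (hf : ContDiff ℝ (⊤ : ℕ∞) f)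
    (hg : ContDiff ℝ (⊤ : ℕ∞) g) (c : ℂ) (j : ℕ) (x : ℝ) :
    iteratedDeriv j (f + c • g) x = iteratedDeriv j f x + c * iteratedDeriv j g x := by
  have hcg : ContDiffAt ℝ j (c • g) x :=
    ((hg.const_smul c).of_le (by exact_mod_cast le_top)).contDiffAt
  rw [iteratedDeriv_add (hf.of_le (by exact_mod_cast le_top)).contDiffAt hcg,
    iteratedDeriv_const_smul_field, smul_eq_mul]

theorem tendsto_inv_pow_smul_nhdsNE {E : Type*} [NormedAddCommGroup E] [NormedSpace ℝ E]
    {f : ℝ → E} {x₀ : ℝ} {m : ℕ} (hf : ContDiff ℝ m f)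
    (hf₀ : ∀ j < m, iteratedDeriv j f x₀ = 0) :
    Tendsto (fun x => ((x - x₀) ^ m)⁻¹ • f x) (𝓝[≠] x₀)
      (𝓝 ((m.factorial : ℝ)⁻¹ • iteratedDeriv m f x₀)) := by
  have htaylor : ∀ x, taylorWithinEval f m univ x₀ x =
      ((m.factorial : ℝ)⁻¹ * (x - x₀) ^ m) • iteratedDeriv m f x₀ := by
    intro x
    rw [taylor_within_apply, Finset.sum_range_succ, Finset.sum_eq_zero, zero_add,
      iteratedDerivWithin_univ]
    intro j hj
    rw [iteratedDerivWithin_univ, hf₀ j (Finset.mem_range.1 hj), smul_zero]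
  have hrem := ((taylor_tendsto convex_univ (mem_univ x₀) hf.contDiffOn).mono_left
    (nhdsWithin_mono x₀ (subset_univ {x₀}ᶜ))).add_const ((m.factorial : ℝ)⁻¹ • iteratedDeriv m f x₀)
  rw [zero_add] at hrem
  refine hrem.congr' ?_
  filter_upwards [self_mem_nhdsWithin] with x hx
  have hx : (x - x₀) ^ m ≠ 0 := pow_ne_zero _ (sub_ne_zero.2 hx)
  rw [htaylor, smul_sub, smul_smul, mul_left_comm, inv_mul_cancel₀ hx, mul_one, sub_add_cancel]

theorem tendsto_add_mul_div_nhdsNE {N Q : ℝ → ℂ} {b : ℝ} {m : ℕ} (hN : ContDiff ℝ m N)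
    (hQ : ContDiff ℝ m Q) (hNb : ∀ j ≤ m, iteratedDeriv j N b = 0)
    (hQb : HasZeroOfOrder Q b m) (d : ℂ) :
    Tendsto (fun x => (N x + d * Q x) / Q x) (𝓝[≠] b) (𝓝 d) := by
  have hc : (m.factorial : ℝ)⁻¹ • iteratedDeriv m Q b ≠ 0 :=
    smul_ne_zero (by positivity) hQb.2
  have tN := tendsto_inv_pow_smul_nhdsNE hN fun j hj => hNb j hj.le
  rw [hNb m le_rfl, smul_zero] at tN
  have tQ := tendsto_inv_pow_smul_nhdsNE hQ hQb.1
  have hlim := (tN.div tQ hc).add_const d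
  rw [zero_div, zero_add] at hlim
  refine hlim.congr' ?_
  filter_upwards [tQ.eventually_ne hc] with x hQx
  obtain ⟨hx, hQx⟩ := smul_ne_zero_iff.1 hQx
  have hx' : ((((x - b) ^ m)⁻¹ : ℝ) : ℂ) ≠ 0 := Complex.ofReal_ne_zero.2 hx
  rw [Pi.div_apply, Complex.real_smul, Complex.real_smul, mul_div_mul_left _ _ hx',
    div_add' _ _ _ hQx]

theorem IsBernsteinBasis.iteratedDeriv_pred_eq {l : List ℂ} {c : ℂ} {a b : ℝ}
    {p q : ℕ → ℝ → ℂ} (hp : IsBernsteinBasis (l ++ [c]) a b p) (hq : IsBernsteinBasis l a b q)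
    {k : ℕ} (hk1 : 1 ≤ k) (hk : k ≤ l.length) :
    ∀ j < k, iteratedDeriv j (q (k - 1)) a = iteratedDeriv j (deriv (p k) - c • p k) a := by
  obtain ⟨hpk, ⟨hpa, -⟩, -, hpk1⟩ := hp k (by simpa using hk)
  obtain ⟨-, ⟨hqa, -⟩, -, hqk1⟩ := hq (k - 1) (by omega)
  intro j hj
  rw [iteratedDeriv_deriv_sub_smul hpk.1, hpa j hj]
  rcases (Nat.le_sub_one_of_lt hj).lt_or_eq with hj' | rfl
  · rw [hqa j hj', hpa (j + 1) (by omega)]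
    ring
  · rw [hqk1, Nat.sub_add_cancel hk1, hpk1]
    ring

-- `g` stands for `q_{k-1}` when `k ≥ 1` and for `0` when `k = 0`.
theorem exists_deriv_sub_smul_eq_add_smul {l : List ℂ} {c : ℂ} {a b : ℝ} (hab : a ≠ b)
    (hcheb : IsExtChebyshev l {a, b}) {P Q g : ℝ → ℂ} {k : ℕ} (hk : k < l.length)
    (hP : P ∈ ExpPoly (l ++ [c])) (hPb : HasZeroOfOrder P b (l.length - k))
    (hQ : Q ∈ ExpPoly l) (hQa : ∀ j < k, iteratedDeriv j Q a = 0)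
    (hQk : iteratedDeriv k Q a = 1) (hQb : HasZeroOfOrder Q b (l.length - 1 - k))
    (hg : g ∈ ExpPoly l) (hga : ∀ j < k, iteratedDeriv j g a = iteratedDeriv j (deriv P - c • P) a)
    (hgb : ∀ j < l.length - k, iteratedDeriv j g b = 0) :
    ∃ d ≠ 0, Tendsto (fun x => deriv P x / Q x) (𝓝[<] b) (𝓝 d) ∧
      deriv P - c • P = g + d • Q := by
  set d := iteratedDeriv k (deriv P - c • P) a - iteratedDeriv k g a
  have hcontDiff {f : ℝ → ℂ} (hf : ContDiff ℝ (⊤ : ℕ∞) f) (m : ℕ) : ContDiff ℝ m f :=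
    hf.of_le (by exact_mod_cast le_top)
  have hD := iteratedDeriv_deriv_sub_smul hP.1 c
  have hsum := iteratedDeriv_add_smul hg.1 hQ.1 d
  have heq : deriv P - c • P = g + d • Q := by
    refine hcheb.eq_of_iteratedDeriv_eq hab (deriv_sub_smul_mem_expPoly hP)
      ((expPolySubmodule l).add_mem hg ((expPolySubmodule l).smul_mem d hQ))
      (α := k + 1) (β := l.length - 1 - k) (by omega) (fun j hj => ?_) (fun j hj => ?_)
    · rw [hsum]
      rcases Nat.lt_succ_iff_lt_or_eq.1 hj with hj | rfl
      · rw [hga j hj, hQa j hj, mul_zero, add_zero]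
      · rw [hQk, mul_one, add_sub_cancel]
    · rw [hsum, hD, hPb.1 (j + 1) (by omega), hPb.1 j (by omega), hgb j (by omega), hQb.1 j hj]
      ring
  have hd : d ≠ 0 := by
    intro hd0
    have hPb' := congrArg (fun f => iteratedDeriv (l.length - 1 - k) f b) heq
    simp only [hd0, zero_smul, add_zero, hD, hgb _ (by omega : l.length - 1 - k < l.length - k),
      hPb.1 _ (by omega : l.length - 1 - k < l.length - k), mul_zero, sub_zero] at hPb'
    rw [show l.length - 1 - k + 1 = l.length - k by omega] at hPb'
    exact hPb.2 hPb'
  refine ⟨d, hd, ?_, heq⟩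
  have hN : ∀ j ≤ l.length - 1 - k, iteratedDeriv j (g + c • P) b = 0 := by
    intro j hj
    rw [iteratedDeriv_add_smul hg.1 hP.1, hgb j (by omega), hPb.1 j (by omega), mul_zero,
      add_zero]
  refine ((tendsto_add_mul_div_nhdsNE (hcontDiff (hg.1.add (hP.1.const_smul c)) _)
    (hcontDiff hQ.1 _) hN hQb d).mono_left (nhdsWithin_mono b fun x hx => ne_of_lt hx)).congr
    fun x => ?_
  have hx := congrFun heq x
  simp only [Pi.add_apply, Pi.sub_apply, Pi.smul_apply, smul_eq_mul] at hx ⊢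
  rw [show deriv P x = g x + c * P x + d * Q x by linear_combination hx]

theorem bernstein_derivative_recursion_general
    (n : ℕ) (hn : 1 ≤ n) (l' : List ℂ) (hl' : l'.length = n) (lamn : ℂ)
    (a b : ℝ) (hab : a ≠ b)
    (hcheb' : IsExtChebyshev l' {a, b})
    (p q : ℕ → ℝ → ℂ)
    (hp : IsBernsteinBasis (l' ++ [lamn]) a b p)
    (hq : IsBernsteinBasis l' a b q) :
    (∀ k < n, ∃ d : ℂ, d ≠ 0 ∧
      Tendsto (fun x => deriv (p k) x / q k x) (𝓝[<] b) (𝓝 d) ∧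
      (k = 0 → ∀ x : ℝ, deriv (p k) x - lamn * p k x = d * q k x) ∧
      (1 ≤ k → ∀ x : ℝ, deriv (p k) x - lamn * p k x = q (k - 1) x + d * q k x)) ∧
    (∀ x : ℝ, deriv (p n) x - lamn * p n x = q (n - 1) x) := by
  subst hl'
  have hpred {k : ℕ} (hk1 : 1 ≤ k) (hk : k ≤ l'.length) := hp.iteratedDeriv_pred_eq hq hk1 hk
  rw [IsBernsteinBasis, show (l' ++ [lamn]).length - 1 = l'.length by simp] at hp
  refine ⟨fun k hk => ?_, fun x => ?_⟩
  · obtain ⟨hpk, -, hpb, -⟩ := hp k hk.le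
    obtain ⟨hqk, ⟨hqa, -⟩, hqb, hqk1⟩ := hq k (by omega)
    rcases Nat.eq_zero_or_pos k with rfl | hk0
    · obtain ⟨d, hd, hlim, heq⟩ := exists_deriv_sub_smul_eq_add_smul hab hcheb' hk hpk hpb hqk
        hqa hqk1 hqb (expPolySubmodule l').zero_mem (by simp) (by simp)
      exact ⟨d, hd, hlim, fun _ x => by simpa using congrFun heq x, by omega⟩
    · obtain ⟨hqk', -, hqb', -⟩ := hq (k - 1) (by omega)
      obtain ⟨d, hd, hlim, heq⟩ := exists_deriv_sub_smul_eq_add_smul hab hcheb' hk hpk hpb hqk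
        hqa hqk1 hqb hqk' (hpred hk0 hk.le) fun j hj => hqb'.1 j (by omega)
      exact ⟨d, hd, hlim, by omega, fun _ x => congrFun heq x⟩
  · obtain ⟨hpn, -, -, -⟩ := hp l'.length le_rfl
    obtain ⟨hqn, -, -, -⟩ := hq (l'.length - 1) le_rfl
    have heq := hcheb'.eq_of_iteratedDeriv_eq hab (deriv_sub_smul_mem_expPoly hpn) hqn
      (α := l'.length) (β := 0) le_rfl (fun j hj => (hpred hn le_rfl j hj).symm) (by simp)
    exact congrFun heq x

/-- **Proposition (recursion for Bernstein bases).**  Suppose `E_{(λ_0,…,λ_n)}` and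
`E_{(λ_0,…,λ_{n−1})}` are extended Chebyshev systems for `{a,b}`, `a ≠ b ∈ ℝ`,
with Bernstein bases `p` resp. `q`.  For `k = 0,…,n−1` the limits
`d_k = lim_{x↑b} (p k)'(x) / q k (x)` exist and are nonzero, and
`(d/dx − λ_n) (p k) = q (k−1) + d_k · q k` for `1 ≤ k ≤ n−1`, while for `k = 0`
the right-hand side is `d_0 · q 0`, and for `k = n` it is `q (n−1)`. -/
theorem bernstein_derivative_recursion
    (n : ℕ) (hn : 1 ≤ n) (l' : List ℂ) (hl' : l'.length = n) (lamn : ℂ)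
    (a b : ℝ) (hab : a ≠ b)
    (hcheb : IsExtChebyshev (l' ++ [lamn]) {a, b})
    (hcheb' : IsExtChebyshev l' {a, b})
    (p q : ℕ → ℝ → ℂ)
    (hp : IsBernsteinBasis (l' ++ [lamn]) a b p)
    (hq : IsBernsteinBasis l' a b q) :
    (∀ k < n, ∃ d : ℂ, d ≠ 0 ∧
      Tendsto (fun x => deriv (p k) x / q k x) (𝓝[<] b) (𝓝 d) ∧
      (k = 0 → ∀ x : ℝ, deriv (p k) x - lamn * p k x = d * q k x) ∧
      (1 ≤ k → ∀ x : ℝ, deriv (p k) x - lamn * p k x = q (k - 1) x + d * q k x)) ∧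
    (∀ x : ℝ, deriv (p n) x - lamn * p n x = q (n - 1) x) :=
  bernstein_derivative_recursion_general n hn l' hl' lamn a b hab hcheb' p q hp hq
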